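/- Let V ⊆ ℝ^{2N} be a co-isotropic subspace (V° ⊆ V) and let K = Π_V ∘ J : V → V where Π_V is orthogonal projection onto V and J the standard complex structure. Then the image of K equals J(V) ∩ V, the maximal complex subspace of V. -/

import Mathlib

/-!
Since `⟪I x, I u⟫ = ⟪x, u⟫`, the symplectic annihilator `V°` is `J (V^⊥)`, where `V^⊥` is the real
orthogonal complement. The residual `J v - K v` lies in `V^⊥`, so co-isotropy puts
`J (J v - K v) = -v - J (K v)` in `V`; hence `J (K v) ∈ V` and `K v ∈ J V ∩ V`. Conversely, if
`J w ∈ V` then the residual `J w - K w` lies in both `V` and `V^⊥`, so it vanishes and `K w = J w`.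
-/

open Complex

section

variable {E : Type*} [NormedAddCommGroup E] [InnerProductSpace ℂ E] {V : Submodule ℝ E}

theorem inner_I_smul_I_smul (x y : E) : inner ℂ (I • x) (I • y) = inner ℂ x y := by
  rw [inner_smul_left, inner_smul_right, conj_I, ← mul_assoc, neg_mul, I_mul_I, neg_neg, one_mul]

theorem eq_zero_of_mem_of_forall_re_inner_eq_zero {x : E} (hx : x ∈ V)
    (h : ∀ u ∈ V, (inner ℂ x u).re = 0) : x = 0 :=
  (re_inner_self_nonpos (𝕜 := ℂ)).mp (h x hx).le

theorem I_smul_mem_of_forall_re_inner_eq_zero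
    (hco : {x : E | ∀ v ∈ V, (inner ℂ x (I • v)).re = 0} ⊆ (V : Set E))
    {x : E} (hx : ∀ u ∈ V, (inner ℂ x u).re = 0) : I • x ∈ V :=
  hco fun u hu => by rw [inner_I_smul_I_smul]; exact hx u hu

theorem I_smul_mem_of_forall_re_inner_I_smul_sub_eq_zero
    (hco : {x : E | ∀ v ∈ V, (inner ℂ x (I • v)).re = 0} ⊆ (V : Set E))
    {v k : E} (hv : v ∈ V) (hk : ∀ u ∈ V, (inner ℂ (I • v - k) u).re = 0) : I • k ∈ V := by
  have hres : I • (I • v - k) ∈ V := I_smul_mem_of_forall_re_inner_eq_zero hco hk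
  have hsum : I • (I • v - k) + v = -(I • k) := by
    rw [smul_sub, smul_smul, I_mul_I, neg_one_smul]
    abel
  simpa [hsum] using V.add_mem hres hv

end

/-- If `V ⊆ ℝ^{2N} ≅ ℂ^N` is co-isotropic (`V° ⊆ V`) and `K = Π_V ∘ J : V → V`,
then the image of `K` equals `J(V) ∩ V`, the maximal complex subspace of `V`. -/
theorem image_K_eq_maximal_complex_subspace (N : ℕ)
    (V : Submodule ℝ (EuclideanSpace ℂ (Fin N)))
    (K : EuclideanSpace ℂ (Fin N) → EuclideanSpace ℂ (Fin N))
    (hK : ∀ v ∈ V, K v ∈ V ∧ ∀ u ∈ V, (inner ℂ (Complex.I • v - K v) u : ℂ).re = 0)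
    (hco : {x : EuclideanSpace ℂ (Fin N) | ∀ v ∈ V, (inner ℂ x (Complex.I • v) : ℂ).re = 0}
      ⊆ (V : Set (EuclideanSpace ℂ (Fin N)))) :
    K '' (V : Set (EuclideanSpace ℂ (Fin N)))
      = ((fun v => Complex.I • v) '' (V : Set (EuclideanSpace ℂ (Fin N))))
        ∩ (V : Set (EuclideanSpace ℂ (Fin N))) := by
  ext z
  constructor
  · rintro ⟨v, hv, rfl⟩
    obtain ⟨hKv, hres⟩ := hK v hv
    have hIKv : I • K v ∈ V := I_smul_mem_of_forall_re_inner_I_smul_sub_eq_zero hco hv hres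
    refine ⟨⟨-(I • K v), V.neg_mem hIKv, ?_⟩, hKv⟩
    simp only [smul_neg, smul_smul, I_mul_I, neg_one_smul, neg_neg]
  · rintro ⟨⟨w, hw, rfl⟩, hIw⟩
    obtain ⟨hKw, hres⟩ := hK w hw
    have hzero : I • w - K w = 0 :=
      eq_zero_of_mem_of_forall_re_inner_eq_zero (V.sub_mem hIw hKw) hres
    exact ⟨w, hw, (sub_eq_zero.mp hzero).symm⟩
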